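/- arXiv:1807.07111 — 6 statements merged into one kernel-verified Lean document; each statement's English description precedes it below -/
import Mathlib

section
/- Let N be a finite nilpotent group and let w be a word in variables x₁,…,xₙ with parameters from N. If the gcd of the exponent sums of the variables in w together with the exponent of N is 1, then the induced map w : Nⁿ → N has fibers of uniform size |N|^(n-1). -/
/-- The map `Nⁿ → N` induced by a word with parameters from `N`
(an element of the free product `N ∗ F⟨x₁,…,xₙ⟩`). -/
def paramWordMap {N : Type*} [Group N] {n : ℕ}
    (w : Monoid.Coprod N (FreeGroup (Fin n))) (v : Fin n → N) : N :=
  Monoid.Coprod.lift (MonoidHom.id N) (FreeGroup.lift v) w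

/-- The exponent sum of the variable `xᵢ` in a word with parameters. -/
def paramExpSum {N : Type*} [Group N] {n : ℕ}
    (w : Monoid.Coprod N (FreeGroup (Fin n))) (i : Fin n) : ℤ :=
  Multiplicative.toAdd <|
    Monoid.Coprod.lift 1
      (FreeGroup.lift fun j => if j = i then Multiplicative.ofAdd (1 : ℤ) else 1) w

/-
Let `Z` be the centre of `N` and `π : N → N ⧸ Z`. Multiplying the variables by central elements
`zᵢ` multiplies the value of `w` by `∏ zᵢ ^ eᵢ`, where the `eᵢ` are the exponent sums. As
`gcd(e, exp N) = 1`, the homomorphism `z ↦ ∏ zᵢ ^ eᵢ` from `Zⁿ` to `Z` is surjective, so each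
of its fibres has `|Z|^(n-1)` elements. Thus each point of the fibre of the induced word on `N ⧸ Z`
over `π g` has exactly `|Z|^(n-1)` lifts in the fibre of `w` over `g`, and induction on the
nilpotency class gives `|N ⧸ Z|^(n-1) * |Z|^(n-1) = |N|^(n-1)`.
-/

open Monoid Function
open scoped IsMulCommutative

theorem MonoidHom.card_preimage_singleton_mul_card {G H : Type*} [Group G] [Group H]
    {f : G →* H} (hf : Surjective f) (h : H) :
    Nat.card (f ⁻¹' {h}) * Nat.card H = Nat.card G := by
  rw [Nat.card_congr (f.fiberEquivKerOfSurjective hf h), ← f.ker.card_mul_index,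
    Subgroup.index_ker, f.range_eq_top.mpr hf, Subgroup.card_top]

theorem Nat.card_subtype_eq_mul_of_card_fiber {α β : Type*} [Finite α] [Finite β]
    {p : α → Prop} {q : β → Prop} (f : α → β) (hf : ∀ a, p a → q (f a)) {m : ℕ}
    (hm : ∀ b, q b → Nat.card {a // p a ∧ f a = b} = m) :
    Nat.card {a // p a} = Nat.card {b // q b} * m := by
  have := Fintype.ofFinite {b // q b}
  let F : {a // p a} → {b // q b} := fun a => ⟨f a, hf a a.2⟩
  have hF (b : {b // q b}) : Nat.card {a // F a = b} = m := by
    rw [← hm b b.2]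
    exact Nat.card_congr ((Equiv.subtypeSubtypeEquivSubtypeExists _ _).trans
      (Equiv.subtypeEquivRight fun a => by simp [F, Subtype.ext_iff]))
  rw [← Nat.card_congr (Equiv.sigmaFiberEquiv F), Nat.card_sigma, Finset.sum_congr rfl
    fun b _ => hF b, Finset.sum_const, Finset.card_univ, smul_eq_mul, Nat.card_eq_fintype_card]

section ProdZPow

variable {A ι : Type*} [CommGroup A] [Fintype ι]

@[simps]
def prodZPowHom (e : ι → ℤ) : (ι → A) →* A where
  toFun z := ∏ i, z i ^ e i
  map_one' := by simp
  map_mul' a b := by simp [mul_zpow, Finset.prod_mul_distrib]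

theorem prodZPowHom_add (e e' : ι → ℤ) (z : ι → A) :
    prodZPowHom (e + e') z = prodZPowHom e z * prodZPowHom e' z := by
  simp [zpow_add, Finset.prod_mul_distrib]

theorem prodZPowHom_neg (e : ι → ℤ) (z : ι → A) :
    prodZPowHom (-e) z = (prodZPowHom e z)⁻¹ := by
  simp [zpow_neg]

-- The class of `a` in `A ⧸ range` has order dividing every `e i` and the exponent of `A`.
theorem prodZPowHom_surjective {e : ι → ℤ}
    (he : Nat.gcd (Finset.univ.gcd fun i => (e i).natAbs) (exponent A) = 1) :
    Surjective (prodZPowHom (A := A) e) := by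
  classical
  intro a
  set H := (prodZPowHom (A := A) e).range
  have hpow (i : ι) : a ^ e i ∈ H :=
    ⟨Pi.mulSingle i a, by
      rw [prodZPowHom_apply, Finset.prod_eq_single i (fun j _ hj => by simp [hj]) (by simp),
        Pi.mulSingle_eq_same]⟩
  have hord : orderOf (a : A ⧸ H) ∣ 1 := by
    rw [← he]
    refine Nat.dvd_gcd (Finset.dvd_gcd fun i _ => ?_) ?_
    · rw [← Int.natCast_dvd, orderOf_dvd_iff_zpow_eq_one, ← QuotientGroup.mk_zpow,
        QuotientGroup.eq_one_iff]
      exact hpow i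
    · exact orderOf_dvd_of_pow_eq_one <| by
        rw [← QuotientGroup.mk_pow, pow_exponent_eq_one, QuotientGroup.mk_one]
  exact (QuotientGroup.eq_one_iff a).mp (orderOf_eq_one_iff.mp (Nat.dvd_one.mp hord))

theorem card_prodZPowHom_preimage_singleton [Finite A] {n : ℕ} {e : Fin n → ℤ}
    (he : Surjective (prodZPowHom (A := A) e)) (a : A) :
    Nat.card (prodZPowHom e ⁻¹' {a}) = Nat.card A ^ (n - 1) := by
  have h := MonoidHom.card_preimage_singleton_mul_card he a
  rw [Nat.card_fun, Nat.card_fin] at h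
  cases n with
  | zero => exact Nat.eq_one_of_mul_eq_one_right h
  | succ n => exact Nat.eq_of_mul_eq_mul_right Nat.card_pos (by rwa [pow_succ] at h)

end ProdZPow

section ParamWord

variable {G : Type*} [Group G] {n : ℕ}

@[simp] theorem paramWordMap_inl (g : G) (v : Fin n → G) :
    paramWordMap (Coprod.inl g : Coprod G (FreeGroup (Fin n))) v = g := by
  simp [paramWordMap]

@[simp] theorem paramWordMap_inr_of (i : Fin n) (v : Fin n → G) :
    paramWordMap (Coprod.inr (FreeGroup.of i) : Coprod G (FreeGroup (Fin n))) v = v i := by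
  simp [paramWordMap]

@[simp] theorem paramWordMap_mul (x y : Coprod G (FreeGroup (Fin n))) (v : Fin n → G) :
    paramWordMap (x * y) v = paramWordMap x v * paramWordMap y v :=
  map_mul _ x y

@[simp] theorem paramWordMap_inv (x : Coprod G (FreeGroup (Fin n))) (v : Fin n → G) :
    paramWordMap x⁻¹ v = (paramWordMap x v)⁻¹ :=
  map_inv _ x

@[simp] theorem paramExpSum_inl (g : G) :
    paramExpSum (Coprod.inl g : Coprod G (FreeGroup (Fin n))) = 0 := by
  ext i; simp [paramExpSum]

@[simp] theorem paramExpSum_inr_of (i : Fin n) :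
    paramExpSum (Coprod.inr (FreeGroup.of i) : Coprod G (FreeGroup (Fin n))) = Pi.single i 1 := by
  ext j; simp [paramExpSum, Pi.single_apply, eq_comm, apply_ite Multiplicative.toAdd]

@[simp] theorem paramExpSum_one : paramExpSum (1 : Coprod G (FreeGroup (Fin n))) = 0 := by
  ext i; simp [paramExpSum]

@[simp] theorem paramExpSum_mul (x y : Coprod G (FreeGroup (Fin n))) :
    paramExpSum (x * y) = paramExpSum x + paramExpSum y := by
  ext i; simp [paramExpSum]

@[simp] theorem paramExpSum_inv (x : Coprod G (FreeGroup (Fin n))) :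
    paramExpSum x⁻¹ = -paramExpSum x := by
  ext i; simp [paramExpSum]

theorem paramWordMap_mul_center (w : Coprod G (FreeGroup (Fin n))) (v : Fin n → G)
    (z : Fin n → Subgroup.center G) :
    paramWordMap w (fun i => v i * z i) = paramWordMap w v * prodZPowHom (paramExpSum w) z := by
  have central (c : Subgroup.center G) (g : G) : (c : G) * g = g * c :=
    (Subgroup.mem_center_iff.mp c.2 g).symm
  have hmul (x y : Coprod G (FreeGroup (Fin n)))
      (hx : paramWordMap x (fun i => v i * z i) =
        paramWordMap x v * prodZPowHom (paramExpSum x) z)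
      (hy : paramWordMap y (fun i => v i * z i) =
        paramWordMap y v * prodZPowHom (paramExpSum y) z) :
      paramWordMap (x * y) (fun i => v i * z i) =
        paramWordMap (x * y) v * prodZPowHom (paramExpSum (x * y)) z := by
    rw [paramWordMap_mul, paramWordMap_mul, paramExpSum_mul, prodZPowHom_add, hx, hy,
      Subgroup.coe_mul, mul_assoc, ← mul_assoc _ (paramWordMap y v), central _ (paramWordMap y v)]
    simp only [mul_assoc]
  induction w using Coprod.induction_on with
  | inl g => simp
  | inr x =>
    induction x using FreeGroup.induction_on with
    | C1 => simp [paramWordMap]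
    | of i => simp [Pi.single_apply]
    | inv_of i hi =>
      rw [map_inv, paramWordMap_inv, paramWordMap_inv, paramExpSum_inv, prodZPowHom_neg, hi,
        mul_inv_rev, ← Subgroup.coe_inv, central]
    | mul x y hx hy => simpa only [map_mul] using hmul _ _ hx hy
  | mul x y hx hy => exact hmul x y hx hy

end ParamWord

section Map

variable {G H : Type*} [Group G] [Group H] {n : ℕ}

theorem paramWordMap_map (π : G →* H) (w : Coprod G (FreeGroup (Fin n))) (v : Fin n → G) :
    paramWordMap (Coprod.map π (.id _) w) (fun i => π (v i)) = π (paramWordMap w v) := by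
  change ((Coprod.lift (.id H) (FreeGroup.lift _)).comp (Coprod.map π (.id _))) w =
    (π.comp (Coprod.lift (.id G) (FreeGroup.lift v))) w
  congr 1
  ext <;> simp

theorem paramExpSum_map (π : G →* H) (w : Coprod G (FreeGroup (Fin n))) :
    paramExpSum (Coprod.map π (.id _) w) = paramExpSum w := by
  ext i
  change Multiplicative.toAdd (((Coprod.lift 1 (FreeGroup.lift _)).comp
    (Coprod.map π (.id _))) w) = Multiplicative.toAdd (Coprod.lift 1 (FreeGroup.lift _) w)
  congr 2
  ext <;> simp

end Map

section QuotientCenter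

variable {G : Type*} [Group G] {n : ℕ}

theorem card_lifts_in_paramWordMap_fiber (w : Coprod G (FreeGroup (Fin n))) {g : G}
    (u : Fin n → G) {c : Subgroup.center G} (hc : paramWordMap w u * c = g) :
    Nat.card {v : Fin n → G // paramWordMap w v = g ∧
        (fun i => (v i : G ⧸ Subgroup.center G)) = fun i => (u i : G ⧸ Subgroup.center G)} =
      Nat.card (prodZPowHom (paramExpSum w) ⁻¹' {c}) := by
  have mem (v : Fin n → G)
      (hv : (fun i => (v i : G ⧸ Subgroup.center G)) = fun i => (u i : G ⧸ Subgroup.center G))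
      (i : Fin n) : (u i)⁻¹ * v i ∈ Subgroup.center G :=
    QuotientGroup.eq.mp (congrFun hv i).symm
  refine Nat.card_congr
    { toFun v := ⟨fun i => ⟨(u i)⁻¹ * v.1 i, mem v.1 v.2.2 i⟩, ?_⟩
      invFun z := ⟨fun i => u i * z.1 i, ?_, ?_⟩
      left_inv v := by ext; simp
      right_inv z := by ext; simp }
  · have h := paramWordMap_mul_center w u fun i => ⟨(u i)⁻¹ * v.1 i, mem v.1 v.2.2 i⟩
    simp only [mul_inv_cancel_left, v.2.1, ← hc, mul_right_inj] at h
    exact Subtype.ext h.symm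
  · rw [paramWordMap_mul_center, show prodZPowHom (paramExpSum w) z.1 = c from z.2, hc]
  · ext i
    rw [QuotientGroup.mk_mul, (QuotientGroup.eq_one_iff _).mpr (z.1 i).2, mul_one]

theorem card_paramWordMap_fiber_eq_mul [Finite G] (w : Coprod G (FreeGroup (Fin n)))
    (hw : Surjective (prodZPowHom (A := Subgroup.center G) (paramExpSum w))) (g : G) :
    Nat.card {v // paramWordMap w v = g} =
      Nat.card {v : Fin n → G ⧸ Subgroup.center G //
        paramWordMap (Coprod.map (QuotientGroup.mk' _) (.id _) w) v = g} *
      Nat.card (Subgroup.center G) ^ (n - 1) := by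
  refine Nat.card_subtype_eq_mul_of_card_fiber (fun v i => (v i : G ⧸ Subgroup.center G))
    (fun v hv => hv ▸ paramWordMap_map _ w v) fun v' hv' => ?_
  obtain ⟨u, rfl⟩ : ∃ u : Fin n → G, (fun i => (u i : G ⧸ Subgroup.center G)) = v' :=
    ⟨fun i => (v' i).out, funext fun i => QuotientGroup.out_eq' (v' i)⟩
  have hc : (paramWordMap w u)⁻¹ * g ∈ Subgroup.center G :=
    QuotientGroup.eq.mp ((paramWordMap_map _ w u).symm.trans hv')
  rw [card_lifts_in_paramWordMap_fiber w u (c := ⟨_, hc⟩) (mul_inv_cancel_left _ _),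
    card_prodZPowHom_preimage_singleton hw]

end QuotientCenter

def CoprimeWordMapsUniform (G : Type*) [Group G] (n : ℕ) : Prop :=
  ∀ w : Coprod G (FreeGroup (Fin n)),
    Nat.gcd (Finset.univ.gcd fun i => (paramExpSum w i).natAbs) (exponent G) = 1 →
    ∀ g : G, Nat.card {v : Fin n → G // paramWordMap w v = g} = Nat.card G ^ (n - 1)

namespace CoprimeWordMapsUniform

variable {G : Type*} [Group G] {n : ℕ}

theorem of_subsingleton [Subsingleton G] : CoprimeWordMapsUniform G n := fun w _ g => by
  rw [Nat.card_of_subsingleton (⟨1, Subsingleton.elim _ _⟩ : {v // paramWordMap w v = g}),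
    Nat.card_of_subsingleton (1 : G), one_pow]

theorem of_quotient_center [Finite G] (h : CoprimeWordMapsUniform (G ⧸ Subgroup.center G) n) :
    CoprimeWordMapsUniform G n := by
  intro w hw g
  have hsurj := prodZPowHom_surjective (A := Subgroup.center G) (e := paramExpSum w)
    (Nat.Coprime.coprime_dvd_right
      (exponent_dvd_of_monoidHom _ (Subgroup.center G).subtype_injective) hw)
  have hw' := Nat.Coprime.coprime_dvd_right
    (MonoidHom.exponent_dvd (QuotientGroup.mk'_surjective (Subgroup.center G))) hw
  rw [← paramExpSum_map (QuotientGroup.mk' (Subgroup.center G))] at hw'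
  rw [card_paramWordMap_fiber_eq_mul w hsurj, h _ hw', ← mul_pow,
    ← Subgroup.card_eq_card_quotient_mul_card_subgroup]

end CoprimeWordMapsUniform

/-- If `N` is a finite nilpotent group and the gcd of the
exponent sums of the variables of `w` together with the exponent of `N`
is `1`, then the word-with-parameters map `w : Nⁿ → N` has all fibers of
size `|N|^(n-1)`. -/
theorem stmt_4 (N : Type*) [Group N] [Finite N] [Group.IsNilpotent N]
    (n : ℕ) (w : Monoid.Coprod N (FreeGroup (Fin n)))
    (hgcd : Nat.gcd (Finset.univ.gcd fun i => (paramExpSum w i).natAbs)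
      (Monoid.exponent N) = 1) :
    ∀ g : N, Nat.card {v : Fin n → N // paramWordMap w v = g} =
      Nat.card N ^ (n - 1) :=
  Group.nilpotent_center_quotient_ind (P := fun G _ _ => Finite G → CoprimeWordMapsUniform G n) N
    (fun _ _ _ _ => .of_subsingleton) (fun _ _ _ ih _ => (ih inferInstance).of_quotient_center)
    ‹_› w hgcd
end

section
/- Let G be a finite nilpotent group and w : Gⁿ → G a surjective word map (induced by a word in the free group on n generators). Then for every g ∈ G, |w⁻¹(g)| = |G|^(n-1); i.e., the induced probability distribution is uniform. -/
/-!
Induct on the nilpotency class, passing from `G` to `G ⧸ Z(G)`. For central `z : α → Z(G)` the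
word map satisfies `w(v z) = w(v) w(z)`, so once `w` is onto `Z(G)`, right translation by tuples
in `Z(G)` makes all fibres of `w` over a coset `g Z(G)` equinumerous. Counting the tuples `v` with
`w(v) ∈ g Z(G)` through these fibres, and through the fibre of `w` on `G ⧸ Z(G)` over `g Z(G)`,
gives `|w⁻¹(g)| · |Z(G)| = |Z(G)|ⁿ · |G ⧸ Z(G)|ⁿ⁻¹`.

To see that `w` is onto `Z(G)`: on an abelian group `w` is a homomorphism of tuples;
if it is not onto, its cokernel maps onto some `ℤ/p` on which every value of `w` is trivial, so
`w` is not onto `ℤ/p`. But a finite nilpotent group maps onto `ℤ/p` for every prime `p` dividing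
its order (project onto the Sylow `p`-subgroup, a direct factor, and divide out a subgroup of
index `p`), so surjectivity on `G` passes to every such `ℤ/p`.
-/

open Function Subgroup

theorem Nat.card_subtype_mem_eq_mul {X Y : Type*} [Finite X] [Finite Y] (f : X → Y)
    (S : Set Y) {k : ℕ} (hk : ∀ y ∈ S, Nat.card {x // f x = y} = k) :
    Nat.card {x // f x ∈ S} = Nat.card S * k := by
  have := Fintype.ofFinite S
  rw [← Nat.card_congr (Equiv.sigmaSubtypeFiberEquivSubtype f fun _ => Iff.rfl), Nat.card_sigma,
    Finset.sum_congr rfl fun (y : S) _ => hk y y.2, Finset.sum_const, Finset.card_univ,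
    smul_eq_mul, Nat.card_eq_fintype_card]

theorem QuotientGroup.card_mk_eq {G : Type*} [Group G] (N : Subgroup G) (q : G ⧸ N) :
    Nat.card {x : G // (x : G ⧸ N) = q} = Nat.card N :=
  (card_preimage_mk N {q}).trans (by rw [Nat.card_unique (α := ({q} : Set (G ⧸ N))), mul_one])

theorem IsPGroup.exists_surjective_zmod {P : Type*} [Group P] [Finite P] [Nontrivial P]
    {p : ℕ} [Fact p.Prime] (hP : IsPGroup p P) :
    ∃ f : P →* Multiplicative (ZMod p), Surjective f := by
  obtain ⟨k, hk⟩ := IsPGroup.iff_card.mp hP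
  have hk0 : k ≠ 0 := by
    rintro rfl
    exact Finite.one_lt_card.ne' (hk.trans (pow_zero p))
  obtain ⟨H, hH⟩ := Sylow.exists_subgroup_card_pow_prime p (hk ▸ pow_dvd_pow p (k.sub_le 1))
  have hindex : H.index = p := by
    have := H.card_mul_index
    rw [hH, hk, ← pow_sub_one_mul hk0] at this
    exact Nat.eq_of_mul_eq_mul_left (pow_pos (Fact.out : p.Prime).pos _) this
  have : H.Normal :=
    normal_of_index_eq_minFac_card (by rw [hindex, hk, Nat.Prime.pow_minFac Fact.out hk0])
  let e : P ⧸ H ≃* Multiplicative (ZMod p) := mulEquivOfPrimeCardEq hindex (by simp)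
  exact ⟨e.toMonoidHom.comp (QuotientGroup.mk' H),
    e.surjective.comp (QuotientGroup.mk'_surjective H)⟩

theorem Group.exists_surjective_zmod_of_dvd_card {G : Type*} [Group G] [Finite G]
    [Group.IsNilpotent G] {p : ℕ} (hp : p.Prime) (hdvd : p ∣ Nat.card G) :
    ∃ f : G →* Multiplicative (ZMod p), Surjective f := by
  have := Fact.mk hp
  let P : Sylow p G := default
  let e := Sylow.directProductOfNormal (G := G) fun P => inferInstance
  have hp' : p ∈ (Nat.card G).primeFactors :=
    Nat.mem_primeFactors.mpr ⟨hp, hdvd, Nat.card_pos.ne'⟩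
  let π : G →* P := (Pi.evalMonoidHom (fun Q : Sylow p G => (Q : Subgroup G)) P).comp
    ((Pi.evalMonoidHom _ ⟨p, hp'⟩).comp e.symm.toMonoidHom)
  have hπ : Surjective π := by
    change Surjective (eval P ∘ eval (⟨p, hp'⟩ : (Nat.card G).primeFactors) ∘ e.symm)
    exact (surjective_eval P).comp ((surjective_eval _).comp e.symm.surjective)
  have : Nontrivial P := (nontrivial_iff_ne_bot _).mpr (P.ne_bot_of_dvd_card hdvd)
  obtain ⟨f, hf⟩ := P.isPGroup'.exists_surjective_zmod
  exact ⟨f.comp π, hf.comp hπ⟩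

namespace FreeGroup

variable {α G H : Type*} [Group G] [Group H]

theorem lift_comp_apply (f : G →* H) (v : α → G) (w : FreeGroup α) :
    lift (f ∘ v) w = f (lift v w) :=
  (lift_unique (f.comp (lift v)) (by simp)).symm

theorem surjective_lift_apply_of_surjective {w : FreeGroup α} (f : G →* H)
    (hf : Surjective f) (hw : Surjective fun v : α → G => lift v w) :
    Surjective fun v : α → H => lift v w := by
  intro h
  obtain ⟨g, rfl⟩ := hf h
  obtain ⟨v, rfl⟩ := hw g
  exact ⟨f ∘ v, lift_comp_apply f v w⟩

theorem lift_mul_apply {A : Type*} [CommGroup A] (v v' : α → A) (w : FreeGroup α) :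
    lift (v * v') w = lift v w * lift v' w := by
  have : lift (v * v') = lift v * lift v' := ext_hom _ _ (by simp)
  exact DFunLike.congr_fun this w

theorem lift_mul_center_apply (v : α → G) (z : α → center G) (w : FreeGroup α) :
    lift (fun a => v a * z a) w = lift v w * (lift z w : center G) := by
  induction w using FreeGroup.induction_on with
  | C1 => simp
  | of a => simp
  | inv_of a h =>
    rw [_root_.map_inv, _root_.map_inv, _root_.map_inv, h, mul_inv_rev, coe_inv]
    exact (mem_center_iff.mp (lift z (of a))⁻¹.2 _).symm
  | mul x y hx hy =>
    rw [_root_.map_mul, _root_.map_mul, _root_.map_mul, hx, hy, coe_mul, mul_assoc, mul_assoc,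
      ← mul_assoc (lift z x : G), ← mem_center_iff.mp (lift z x).2, mul_assoc]

theorem surjective_lift_apply_of_forall_prime_dvd_card {A : Type*} [CommGroup A] [Finite A]
    {w : FreeGroup α} (h : ∀ p, p.Prime → p ∣ Nat.card A →
      Surjective fun u : α → Multiplicative (ZMod p) => lift u w) :
    Surjective fun v : α → A => lift v w := by
  let φ : (α → A) →* A := MonoidHom.mk' (fun v => lift v w) fun v v' => lift_mul_apply v v' w
  suffices φ.range = ⊤ from fun a => MonoidHom.mem_range.mp (this ▸ mem_top a)
  by_contra hφ
  set p := φ.range.index.minFac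
  have hp : p.Prime := Nat.minFac_prime (mt index_eq_one.mp hφ)
  obtain ⟨f, hf⟩ := Group.exists_surjective_zmod_of_dvd_card hp (Nat.minFac_dvd _)
  let g := f.comp (QuotientGroup.mk' φ.range)
  have hg : Surjective g := hf.comp (QuotientGroup.mk'_surjective _)
  obtain ⟨u, hu⟩ := h p hp ((Nat.minFac_dvd _).trans φ.range.index_dvd_card) (.ofAdd 1)
  choose y hy using fun a => hg (u a)
  have hu1 : lift u w = 1 := by
    rw [show u = g ∘ y from funext fun a => (hy a).symm, lift_comp_apply]
    change f (φ y : A ⧸ φ.range) = 1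
    rw [(QuotientGroup.eq_one_iff _).mpr (MonoidHom.mem_range.mpr ⟨y, rfl⟩), _root_.map_one]
  have : Fact (1 < p) := ⟨hp.one_lt⟩
  exact one_ne_zero (ofAdd_eq_one.mp (hu.symm.trans hu1))

open scoped IsMulCommutative in
theorem surjective_lift_apply_center [Finite G] [Group.IsNilpotent G] {w : FreeGroup α}
    (hw : Surjective fun v : α → G => lift v w) :
    Surjective fun z : α → center G => lift z w :=
  surjective_lift_apply_of_forall_prime_dvd_card fun _ hp hpZ =>
    have ⟨f, hf⟩ := Group.exists_surjective_zmod_of_dvd_card hp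
      (hpZ.trans (card_subgroup_dvd_card _))
    surjective_lift_apply_of_surjective f hf hw

theorem card_mk_lift_apply_eq_card_mul_pow [Fintype α] [Finite G] (N : Subgroup G) [N.Normal]
    (w : FreeGroup α) (q : G ⧸ N) :
    Nat.card {v : α → G // (lift v w : G ⧸ N) = q} =
      Nat.card {u : α → G ⧸ N // lift u w = q} * Nat.card N ^ Fintype.card α := by
  have hfiber (u : α → G ⧸ N) :
      Nat.card {v : α → G // (fun a => (v a : G ⧸ N)) = u} = Nat.card N ^ Fintype.card α := by
    rw [Nat.card_congr ((Equiv.subtypeEquivRight fun v => funext_iff).trans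
      (Equiv.subtypePiEquivPi (p := fun a (x : G) => (x : G ⧸ N) = u a))), Nat.card_pi]
    simp [QuotientGroup.card_mk_eq]
  refine Eq.trans (Nat.card_congr (Equiv.subtypeEquivRight fun v => Iff.of_eq ?_))
    (Nat.card_subtype_mem_eq_mul _ {u | lift u w = q} fun u _ => hfiber u)
  exact congrArg (· = q) (lift_comp_apply (QuotientGroup.mk' N) v w).symm

theorem card_mk_lift_apply_eq_card_center_mul [Finite α] [Finite G] {w : FreeGroup α}
    (hw : Surjective fun z : α → center G => lift z w) (g : G) :
    Nat.card {v : α → G // (lift v w : G ⧸ center G) = g} =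
      Nat.card (center G) * Nat.card {v : α → G // lift v w = g} := by
  have htranslate (y : G) (hy : (y : G ⧸ center G) = g) :
      Nat.card {v : α → G // lift v w = y} = Nat.card {v : α → G // lift v w = g} := by
    obtain ⟨z, hz⟩ := hw ⟨g⁻¹ * y, QuotientGroup.eq.mp hy.symm⟩
    refine (Nat.card_congr (Equiv.subtypeEquiv (Equiv.mulRight fun a => (z a : G))
      fun v => ?_)).symm
    change _ ↔ lift (fun a => v a * z a) w = y
    rw [lift_mul_center_apply, show lift z w = _ from hz, coe_mk, ← mul_assoc, mul_eq_right,
      mul_inv_eq_one]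
  rw [← QuotientGroup.card_mk_eq (center G) g]
  exact Nat.card_subtype_mem_eq_mul _ {y : G | (y : G ⧸ center G) = g} htranslate

theorem card_fiber_mul_card_eq_pow [Fintype α] [Group.IsNilpotent G] [Finite G] {w : FreeGroup α} (hw : Surjective fun v : α → G => lift v w) (g : G) :
    Nat.card {v : α → G // lift v w = g} * Nat.card G = Nat.card G ^ Fintype.card α := by
  revert hw g
  refine Group.nilpotent_center_quotient_ind (P := fun G _ _ => ∀ [Finite G],
    (Surjective fun v : α → G => lift v w) → ∀ g : G,
      Nat.card {v : α → G // lift v w = g} * Nat.card G = Nat.card G ^ Fintype.card α) G ?_ ?_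
  · intro G _ _ _ _ g
    rw [Nat.card_unique (α := G), Nat.card_of_subsingleton (⟨1, Subsingleton.elim _ _⟩ :
      {v : α → G // lift v w = g}), one_pow, one_mul]
  · intro G _ _ ih _ hw g
    have hQ := surjective_lift_apply_of_surjective _ (QuotientGroup.mk'_surjective (center G)) hw
    have hcard := card_eq_card_quotient_mul_card_subgroup (center G)
    calc Nat.card {v : α → G // lift v w = g} * Nat.card G
        = Nat.card {v : α → G // (lift v w : G ⧸ center G) = g} * Nat.card (G ⧸ center G) := by
          rw [card_mk_lift_apply_eq_card_center_mul (surjective_lift_apply_center hw), hcard]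
          ring
      _ = Nat.card {u : α → G ⧸ center G // lift u w = g} * Nat.card (G ⧸ center G) *
            Nat.card (center G) ^ Fintype.card α := by
          rw [card_mk_lift_apply_eq_card_mul_pow]
          ring
      _ = Nat.card G ^ Fintype.card α := by rw [ih hQ, hcard, mul_pow]

end FreeGroup

/-- On a finite nilpotent group `G`, every surjective word map
`w : Gⁿ → G` has all fibers of size `|G|^(n-1)`, i.e. the induced
distribution is uniform. -/
theorem stmt_7 (G : Type*) [Group G] [Finite G] [Group.IsNilpotent G]
    (n : ℕ) (w : FreeGroup (Fin n))
    (hsurj : Function.Surjective (fun v : Fin n → G => FreeGroup.lift v w)) :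
    ∀ g : G, Nat.card {v : Fin n → G // FreeGroup.lift v w = g} =
      Nat.card G ^ (n - 1) := by
  intro g
  have h := FreeGroup.card_fiber_mul_card_eq_pow hsurj g
  rw [Fintype.card_fin] at h
  rcases n with _ | n
  · exact (mul_eq_one.mp h).1
  · exact Nat.eq_of_mul_eq_mul_right Nat.card_pos (h.trans (pow_succ _ _))
end

section
/- Let G be a finite nilpotent group and c(x,y) a word in the commutator subgroup of the free group F⟨x,y⟩. Then the equation x = c(x,y) has exactly |G| solutions in G², and the solution set is exactly {(1, g) : g ∈ G}. -/
/-!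
If `x = c(x, y)` with `c` a product of commutators, then `x` lies in every term of the lower
central series: when `x ∈ γₖ`, the images of `x` and `y` commute modulo `γₖ₊₁`, so the word `c`
evaluates to `1` there, i.e. `x = c(x, y) ∈ γₖ₊₁`. Nilpotency forces `x = 1`, and conversely
`c(1, y) = 1` because `1` and `y` commute.
-/

open scoped commutatorElement

section

variable {G H : Type*} [Group G] [Group H]

theorem Subgroup.closure_le_centralizer_closure {s : Set G} (hs : s ⊆ Set.centralizer s) :
    Subgroup.closure s ≤ Subgroup.centralizer (Subgroup.closure s) := by
  rw [Subgroup.centralizer_closure]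
  exact (Subgroup.closure_le _).mpr hs

theorem MonoidHom.map_eq_one_of_mem_commutator (f : G →* H)
    (hf : f.range ≤ Subgroup.centralizer f.range) {g : G} (hg : g ∈ commutator G) : f g = 1 := by
  have hker : commutator G ≤ f.ker := by
    rw [commutator_def, Subgroup.commutator_le]
    intro a _ b _
    rw [MonoidHom.mem_ker, map_commutatorElement, commutatorElement_eq_one_iff_mul_comm]
    exact Subgroup.mem_centralizer_iff.mp (hf ⟨b, rfl⟩) (f a) ⟨a, rfl⟩
  exact hker hg

namespace FreeGroup

theorem lift_eq_one_of_mem_commutator {ι : Type*} {f : ι → H}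
    (hf : Set.range f ⊆ Set.centralizer (Set.range f)) {c : FreeGroup ι}
    (hc : c ∈ commutator (FreeGroup ι)) : lift f c = 1 := by
  refine (lift f).map_eq_one_of_mem_commutator ?_ hc
  rw [range_lift_eq_closure]
  exact Subgroup.closure_le_centralizer_closure hf

theorem lift_pair_eq_one_of_commute {u v : H} (huv : Commute u v) {c : FreeGroup (Fin 2)}
    (hc : c ∈ commutator (FreeGroup (Fin 2))) : lift ![u, v] c = 1 := by
  refine lift_eq_one_of_mem_commutator ?_ hc
  rintro _ ⟨i, rfl⟩ _ ⟨j, rfl⟩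
  fin_cases i <;> fin_cases j <;> simp [huv.eq]

theorem lift_pair_mem_of_commutatorElement_mem {N : Subgroup G} [N.Normal] {x y : G}
    (hxy : ⁅x, y⁆ ∈ N) {c : FreeGroup (Fin 2)} (hc : c ∈ commutator (FreeGroup (Fin 2))) :
    lift ![x, y] c ∈ N := by
  let π := QuotientGroup.mk' N
  have hπ : π (lift ![x, y] c) = lift ![π x, π y] c :=
    lift_unique (π.comp (lift ![x, y])) fun i => by fin_cases i <;> simp
  have hcomm : Commute (π x) (π y) := by
    rw [← commutatorElement_eq_one_iff_commute, ← map_commutatorElement]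
    exact (QuotientGroup.eq_one_iff _).mpr hxy
  rw [← QuotientGroup.eq_one_iff, ← QuotientGroup.mk'_apply, hπ]
  exact lift_pair_eq_one_of_commute hcomm hc

end FreeGroup

theorem mem_lowerCentralSeries_of_eq_lift_pair {x y : G} {c : FreeGroup (Fin 2)}
    (hc : c ∈ commutator (FreeGroup (Fin 2))) (hx : x = FreeGroup.lift ![x, y] c) (n : ℕ) :
    x ∈ (⊤ : Subgroup G).lowerCentralSeries n := by
  induction n with
  | zero => exact Subgroup.mem_top x
  | succ n ih =>
    have hxy : ⁅x, y⁆ ∈ (⊤ : Subgroup G).lowerCentralSeries (n + 1) :=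
      Subgroup.commutator_mem_commutator ih (Subgroup.mem_top y)
    rw [hx]
    exact FreeGroup.lift_pair_mem_of_commutatorElement_mem hxy hc

theorem eq_one_of_eq_lift_pair [Group.IsNilpotent G] {x y : G} {c : FreeGroup (Fin 2)}
    (hc : c ∈ commutator (FreeGroup (Fin 2))) (hx : x = FreeGroup.lift ![x, y] c) : x = 1 := by
  obtain ⟨n, hn⟩ := Subgroup.nilpotent_iff_lowerCentralSeries.mp ‹Group.IsNilpotent G›
  simpa [hn] using mem_lowerCentralSeries_of_eq_lift_pair hc hx n

end

theorem stmt_10_general (G : Type*) [Group G] [Group.IsNilpotent G]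
    (c : FreeGroup (Fin 2)) (hc : c ∈ commutator (FreeGroup (Fin 2))) :
    Nat.card {p : G × G // p.1 = FreeGroup.lift ![p.1, p.2] c} = Nat.card G ∧
      {p : G × G | p.1 = FreeGroup.lift ![p.1, p.2] c} =
        {p : G × G | p.1 = 1} := by
  have hsol : {p : G × G | p.1 = FreeGroup.lift ![p.1, p.2] c} = {p : G × G | p.1 = 1} := by
    ext ⟨x, y⟩
    refine ⟨eq_one_of_eq_lift_pair hc, fun hx : x = 1 => ?_⟩
    show x = _
    rw [hx, FreeGroup.lift_pair_eq_one_of_commute (Commute.one_left y) hc]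
  refine ⟨?_, hsol⟩
  calc Nat.card {p : G × G // p.1 = FreeGroup.lift ![p.1, p.2] c}
      = Nat.card {p : G × G // p.1 = 1} := Nat.card_congr (Equiv.setCongr hsol)
    _ = Nat.card ({x : G // x = 1} × G) :=
        Nat.card_congr (Equiv.prodSubtypeFstEquivSubtypeProd (α := G) (β := G) (p := (· = 1)))
    _ = Nat.card G := by simp

/-- For a finite nilpotent group `G` and a word `c(x,y)` in
the commutator subgroup of the free group on two generators, the equation
`x = c(x,y)` has exactly `|G|` solutions in `G²`, namely the pairs
`(1, g)` for `g ∈ G`. -/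
theorem stmt_10 (G : Type*) [Group G] [Finite G] [Group.IsNilpotent G]
    (c : FreeGroup (Fin 2)) (hc : c ∈ commutator (FreeGroup (Fin 2))) :
    Nat.card {p : G × G // p.1 = FreeGroup.lift ![p.1, p.2] c} = Nat.card G ∧
      {p : G × G | p.1 = FreeGroup.lift ![p.1, p.2] c} =
        {p : G × G | p.1 = 1} :=
  stmt_10_general G c hc
end

section
/- Let G be a finite nonabelian group and w = [x,y] the commutator word. Then |w⁻¹(1)| > |w⁻¹(g)| for all g ≠ 1 in G, and there exists g ≠ 1 with w⁻¹(g) nonempty. In particular the commutator word map is not uniform over its image. -/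
/-- For a finite nonabelian group `G` and the commutator
word `w = [x,y] = x⁻¹y⁻¹xy`, the fiber over `1` is strictly larger than
the fiber over any `g ≠ 1`, and some fiber over a `g ≠ 1` is nonempty;
in particular the commutator word map is not uniform over its image. -/
theorem stmt_13 (G : Type*) [Group G] [Finite G]
    (hG : ¬ ∀ a b : G, a * b = b * a) :
    (∀ g : G, g ≠ 1 →
        Nat.card {p : G × G // p.1⁻¹ * p.2⁻¹ * p.1 * p.2 = g} <
          Nat.card {p : G × G // p.1⁻¹ * p.2⁻¹ * p.1 * p.2 = 1}) ∧
      ∃ g : G, g ≠ 1 ∧ ∃ p : G × G, p.1⁻¹ * p.2⁻¹ * p.1 * p.2 = g := by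
  classical
  have _inst := Fintype.ofFinite G
  constructor
  · intro g hg
    -- injection from fiber over g to fiber over 1
    let F : {p : G × G // p.1⁻¹ * p.2⁻¹ * p.1 * p.2 = g} →
        {p : G × G // p.1⁻¹ * p.2⁻¹ * p.1 * p.2 = 1} := fun x =>
      ⟨(x.1.1, x.1.2 * (Classical.choose (⟨x.1.2, x.2⟩ :
          ∃ c : G, x.1.1⁻¹ * c⁻¹ * x.1.1 * c = g))⁻¹), by
        set a := x.1.1
        set b := x.1.2
        have hc := Classical.choose_spec (⟨x.1.2, x.2⟩ :
          ∃ c : G, x.1.1⁻¹ * c⁻¹ * x.1.1 * c = g)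
        set c := Classical.choose (⟨x.1.2, x.2⟩ :
          ∃ c : G, x.1.1⁻¹ * c⁻¹ * x.1.1 * c = g)
        have hb : a⁻¹ * b⁻¹ * a * b = g := x.2
        have h1 : a⁻¹ * b⁻¹ * a * b = a⁻¹ * c⁻¹ * a * c := by rw [hb, hc]
        have h2 : b⁻¹ * a * b = c⁻¹ * a * c := by
          have := congrArg (fun t => a * t) h1
          simpa [mul_assoc] using this
        show a⁻¹ * (b * c⁻¹)⁻¹ * a * (b * c⁻¹) = 1
        have : a⁻¹ * (b * c⁻¹)⁻¹ * a * (b * c⁻¹)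
            = a⁻¹ * (c * (b⁻¹ * a * b) * c⁻¹) := by group
        rw [this, h2]
        group⟩
    have hinj : Function.Injective F := by
      rintro ⟨⟨a₁, b₁⟩, h₁⟩ ⟨⟨a₂, b₂⟩, h₂⟩ h
      have h' := congrArg (fun y => y.1) h
      simp only [F] at h'
      have ha : a₁ = a₂ := congrArg Prod.fst h'
      subst ha
      have hb := congrArg Prod.snd h'
      simp only at hb
      have : b₁ = b₂ := by
        exact mul_right_cancel hb
      simp [this]
    have hnm : (⟨(1, 1), by simp⟩ :
        {p : G × G // p.1⁻¹ * p.2⁻¹ * p.1 * p.2 = 1}) ∉ Set.range F := by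
      rintro ⟨⟨⟨a, b⟩, h⟩, hFx⟩
      have h1 := congrArg (fun y => y.1.1) hFx
      simp only [F] at h1
      -- a = 1
      have : g = 1 := by
        rw [← h, h1]
        group
      exact hg this
    have := Fintype.card_lt_of_injective_of_notMem F hinj hnm
    simpa [Nat.card_eq_fintype_card] using this
  · push_neg at hG
    obtain ⟨a, b, hab⟩ := hG
    refine ⟨a⁻¹ * b⁻¹ * a * b, ?_, ⟨(a, b), rfl⟩⟩
    intro h
    apply hab
    have := congrArg (fun t => b * a * t) h
    simpa [mul_assoc] using this
end

section
/- For any n ≥ 2, a finite group G is abelian if and only if every word map w : Gⁿ → G in n variables has fibers of uniform size over its image (i.e., all nonempty fibers of w have equal cardinality). -/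
/-!
If `G` is abelian, evaluating a word `w` is a homomorphism `Gⁿ → G`, whose nonempty fibers are
cosets of its kernel and so all have the same size.

Conversely, if `a` and `b` do not commute, the commutator word `⁅x₀, x₁⁆` takes the value
`g = ⁅a, b⁆ ≠ 1`. For a fixed first coordinate `x`, the solutions `y` of `⁅x, y⁆ = g` form a left
coset of the centralizer of `x`, while the solutions of `⁅x, y⁆ = 1` form the centralizer itself;
for `x = 1` the first set is empty. Hence the fiber over `g` is strictly smaller than the one
over `1`.
-/

open Function
open scoped commutatorElement

namespace FreeGroup

variable {α : Type*}

def HasUniformFibers (G : Type*) [Group G] (w : FreeGroup α) : Prop :=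
  ∀ g h : G, (∃ v : α → G, lift v w = g) → (∃ v : α → G, lift v w = h) →
    Nat.card {v : α → G // lift v w = g} = Nat.card {v : α → G // lift v w = h}

section CommGroup

variable {G : Type*} [CommGroup G]

theorem lift_mul (u v : α → G) : lift (u * v) = lift u * lift v :=
  ext_hom _ _ fun _ => by simp

theorem lift_one : lift (1 : α → G) = 1 :=
  ext_hom _ _ fun _ => by simp

def wordMapHom (w : FreeGroup α) : (α → G) →* G where
  toFun v := lift v w
  map_one' := by rw [lift_one]; rfl
  map_mul' u v := by rw [lift_mul]; rfl

end CommGroup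

end FreeGroup

theorem MonoidHom.natCard_fiber_eq_of_mem_range {A B : Type*} [Group A] [Group B] (f : A →* B)
    {x y : B} (hx : x ∈ Set.range f) (hy : y ∈ Set.range f) :
    Nat.card {a // f a = x} = Nat.card {a // f a = y} := by
  obtain ⟨a, rfl⟩ := hx
  obtain ⟨b, rfl⟩ := hy
  exact Nat.card_congr <| (Equiv.mulRight (a⁻¹ * b)).subtypeEquiv fun c => by
    simp [mul_inv_eq_iff_eq_mul]

theorem FreeGroup.hasUniformFibers_of_commGroup {α G : Type*} [CommGroup G] (w : FreeGroup α) :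
    HasUniformFibers G w := fun g h hg hh =>
  (wordMapHom (G := G) w).natCard_fiber_eq_of_mem_range (x := g) (y := h) hg hh

section Commutator

variable {G : Type*} [Group G]

theorem commutatorElement_inv_mul_eq_one {x y z : G} (h : ⁅x, y⁆ = ⁅x, z⁆) :
    ⁅x, y⁻¹ * z⁆ = 1 := by
  simp only [commutatorElement_def] at h ⊢
  have h' : y * x⁻¹ * y⁻¹ = z * x⁻¹ * z⁻¹ := by simpa [mul_assoc] using h
  calc x * (y⁻¹ * z) * x⁻¹ * (y⁻¹ * z)⁻¹ = x * y⁻¹ * (z * x⁻¹ * z⁻¹) * y := by group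
    _ = 1 := by rw [← h']; group

theorem card_commutator_fiber_lt_card_commutator_fiber_one [Finite G] {ι : Type*} [Finite ι]
    {i j : ι} (hij : i ≠ j) {g : G} (hg : g ≠ 1) :
    Nat.card {v : ι → G // ⁅v i, v j⁆ = g} < Nat.card {v : ι → G // ⁅v i, v j⁆ = 1} := by
  classical
  let y (x : G) : G := Classical.epsilon fun z => ⁅x, z⁆ = g
  have hy {x z : G} (hz : ⁅x, z⁆ = g) : ⁅x, y x⁆ = g :=
    Classical.epsilon_spec (p := fun z => ⁅x, z⁆ = g) ⟨z, hz⟩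
  let φ (v : {v : ι → G // ⁅v i, v j⁆ = g}) : {v : ι → G // ⁅v i, v j⁆ = 1} :=
    ⟨update v.1 j ((y (v.1 i))⁻¹ * v.1 j), by
      rw [update_of_ne hij, update_self]
      exact commutatorElement_inv_mul_eq_one ((hy v.2).trans v.2.symm)⟩
  have hφ : Injective φ := by
    intro v v' h
    have hi : v.1 i = v'.1 i := by
      simpa [φ, update_of_ne hij] using congrFun (congrArg Subtype.val h) i
    ext k
    have hk := congrFun (congrArg Subtype.val h) k
    rcases eq_or_ne k j with rfl | hkj
    · simpa [φ, hi] using hk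
    · simpa [φ, update_of_ne hkj] using hk
  have h1 : (⟨1, by simp⟩ : {v : ι → G // ⁅v i, v j⁆ = 1}) ∉ Set.range φ := by
    rintro ⟨v, hv⟩
    have hvi : v.1 i = 1 := by simpa [φ, update_of_ne hij] using congrFun (congrArg Subtype.val hv) i
    exact hg (by simpa [hvi] using v.2.symm)
  have := Fintype.ofFinite G
  have := Fintype.ofFinite ι
  simpa only [Nat.card_eq_fintype_card] using Fintype.card_lt_of_injective_of_notMem φ hφ h1

theorem FreeGroup.not_hasUniformFibers_commutator [Finite G] {α : Type*} [Finite α] {i j : α}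
    (hij : i ≠ j) {a b : G} (hab : ¬Commute a b) : ¬HasUniformFibers G ⁅of i, of j⁆ := by
  classical
  intro huniform
  have hlift (v : α → G) : lift v ⁅of i, of j⁆ = ⁅v i, v j⁆ := by simp [map_commutatorElement]
  have hg : ⁅a, b⁆ ≠ 1 := mt commutatorElement_eq_one_iff_commute.mp hab
  have hab_mem : ∃ v : α → G, lift v ⁅of i, of j⁆ = ⁅a, b⁆ :=
    ⟨update (fun _ => a) j b, by simp [hlift, update_of_ne hij]⟩
  have hone_mem : ∃ v : α → G, lift v ⁅of i, of j⁆ = 1 := ⟨1, by simp [hlift]⟩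
  have hcard := huniform _ _ hab_mem hone_mem
  simp only [hlift] at hcard
  exact (card_commutator_fiber_lt_card_commutator_fiber_one hij hg).ne hcard

end Commutator

/-- For any `n ≥ 2`, a finite group `G` is abelian iff every
`n`-variable word map `Gⁿ → G` has fibers of uniform size over its image
(any two nonempty fibers have equal cardinality). -/
theorem stmt_14 (G : Type*) [Group G] [Finite G] (n : ℕ) (hn : 2 ≤ n) :
    (∀ a b : G, a * b = b * a) ↔
      ∀ w : FreeGroup (Fin n), ∀ g h : G,
        (∃ v : Fin n → G, FreeGroup.lift v w = g) →
        (∃ v : Fin n → G, FreeGroup.lift v w = h) →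
        Nat.card {v : Fin n → G // FreeGroup.lift v w = g} =
          Nat.card {v : Fin n → G // FreeGroup.lift v w = h} := by
  constructor
  · intro hcomm
    let _ : CommGroup G := { ‹Group G› with mul_comm := hcomm }
    exact FreeGroup.hasUniformFibers_of_commGroup
  · intro huniform a b
    by_contra hab
    have h01 : (⟨0, by omega⟩ : Fin n) ≠ ⟨1, hn⟩ := by simp
    exact FreeGroup.not_hasUniformFibers_commutator h01 hab (huniform _)
end

section
/- Let G be a finite group, |G| = p^k·m with gcd(p,m) = 1, and suppose for the word map w(x) = x^{p^k} it holds that every element of the image w(G) has exactly p^k preimages and |w(G)| = m. Then G has a normal Sylow p-subgroup. -/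
/-!
A Sylow `p`-subgroup `P` has order `p ^ k`, so all its elements solve `x ^ (p ^ k) = 1`.
The fibre of the word map over `1` is exactly this solution set, and it also has `p ^ k`
elements, so `P` is the whole solution set. That set is closed under conjugation, hence `P`
is normal.
-/

theorem Nat.factorization_pow_mul_of_not_dvd {p k m : ℕ} (hp : p.Prime) (hpm : ¬p ∣ m) :
    (p ^ k * m).factorization p = k := by
  have hm : m ≠ 0 := by rintro rfl; exact hpm (dvd_zero p)
  rw [Nat.factorization_mul (pow_ne_zero _ hp.ne_zero) hm, hp.factorization_pow,
    Finsupp.add_apply, Finsupp.single_eq_same, Nat.factorization_eq_zero_of_not_dvd hpm, add_zero]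

theorem Sylow.card_eq_pow_of_card_eq_pow_mul {G : Type*} [Group G] [Finite G] {p k m : ℕ}
    [hp : Fact p.Prime] (P : Sylow p G) (hcard : Nat.card G = p ^ k * m) (hpm : ¬p ∣ m) :
    Nat.card P = p ^ k := by
  rw [P.card_eq_multiplicity, hcard, Nat.factorization_pow_mul_of_not_dvd hp.out hpm]

theorem Subgroup.normal_of_card_pow_card_eq_one_le {G : Type*} [Group G] [Finite G]
    (H : Subgroup G) (hcard : Nat.card {x : G // x ^ Nat.card H = 1} ≤ Nat.card H) :
    H.Normal := by
  set S : Set G := {x | x ^ Nat.card H = 1}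
  have hHS : (H : Set G) ⊆ S := fun x hx =>
    congrArg Subtype.val (pow_card_eq_one' (x := (⟨x, hx⟩ : H)))
  have hHeq : (H : Set G) = S :=
    Set.eq_of_subset_of_ncard_le hHS (by rwa [← Nat.card_coe_set_eq, ← Nat.card_coe_set_eq])
  refine ⟨fun x hx g => ?_⟩
  have hx : x ^ Nat.card H = 1 := (hHeq ▸ hx : x ∈ S)
  have hconj : g * x * g⁻¹ ∈ S := by
    rw [Set.mem_ofPred_eq, conj_pow, hx, mul_one, mul_inv_cancel]
  exact (hHeq ▸ hconj : g * x * g⁻¹ ∈ (H : Set G))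

theorem stmt_15_general (G : Type*) [Group G] [Finite G] (p k m : ℕ) (hp : p.Prime)
    (hcard : Nat.card G = p ^ k * m) (hcop : Nat.gcd p m = 1)
    (hfib : ∀ g ∈ Set.range (fun x : G => x ^ (p ^ k)),
      Nat.card {x : G // x ^ (p ^ k) = g} = p ^ k) :
    ∃ P : Sylow p G, (P : Subgroup G).Normal := by
  have : Fact p.Prime := ⟨hp⟩
  obtain ⟨P⟩ : Nonempty (Sylow p G) := inferInstance
  have hPcard : Nat.card P = p ^ k :=
    P.card_eq_pow_of_card_eq_pow_mul hcard ((Nat.Prime.coprime_iff_not_dvd hp).mp hcop)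
  refine ⟨P, P.1.normal_of_card_pow_card_eq_one_le ?_⟩
  rw [hPcard, hfib 1 ⟨1, one_pow _⟩]

/-- Let `G` be a finite group of order `p^k · m` with
`gcd(p,m) = 1`. If every element of the image of the power word map
`w(x) = x^{p^k}` has exactly `p^k` preimages and the image has size `m`,
then `G` has a normal Sylow `p`-subgroup. -/
theorem stmt_15 (G : Type*) [Group G] [Finite G] (p k m : ℕ) (hp : p.Prime)
    (hcard : Nat.card G = p ^ k * m) (hcop : Nat.gcd p m = 1)
    (hfib : ∀ g ∈ Set.range (fun x : G => x ^ (p ^ k)),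
      Nat.card {x : G // x ^ (p ^ k) = g} = p ^ k)
    (himg : Nat.card (Set.range (fun x : G => x ^ (p ^ k))) = m) :
    ∃ P : Sylow p G, (P : Subgroup G).Normal :=
  stmt_15_general G p k m hp hcard hcop hfib
end
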